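/- Let G be a finite group, let p be the smallest prime divisor of |G|, and let A be a subgroup of maximum order among the self-centralizing subgroups of G. If |G : A| = p^2 and p^2 < |G : Z(G)| < p^4, then CD(G) = {Z(G), G}. -/

import Mathlib

/-!
Chermak and Delgado's inequality `m(H) m(K) ≤ m(H ⊓ K) m(H ⊔ K)` makes `CD(G)` closed under
intersections, and `H ↦ C(H)` maps `CD(G)` to itself with `C(C(H)) = H`. So for `H ∈ CD(G)` the
abelian subgroup `N = H ⊓ C(H)` lies in `CD(G)` and contains `Z = Z(G)`. If `N` were
self-centralizing, `|N|² = m(N) ≥ m(G) = |G||Z|` and `|N| ≤ |A| = |G|/p²` would give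
`|G : Z| ≥ p⁴`; otherwise `N` lies properly in a self-centralizing `B`, and `|B| ≤ |G|/p²`,
`|B : N| ≥ p` leave `|N : Z| < p`, so `N = Z`. Hence `Z ∈ CD(G)` and `H ⊓ C(H) = Z`.
If neither `H` nor `C(H)` were central, adjoining to `Z` a noncentral element of `C(H)` would give
an abelian `B` with `|B : Z| ≥ p`, and `m(B) ≤ m(Z)` yields `p²|H| ≤ |G|`; likewise
`p²|C(H)| ≤ |G|`, and `|H||C(H)| = |G||Z|` forces `|G : Z| ≥ p⁴` once more. So `H = Z` or
`C(H) = Z`, i.e. `H = C(C(H)) = G`.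
-/

/-- The Chermak-Delgado measure of a subgroup `H` of `G`: `|H| · |C_G(H)|`. -/
noncomputable def cdMeasure (G : Type*) [Group G] (H : Subgroup G) : ℕ :=
  Nat.card H * Nat.card (Subgroup.centralizer (H : Set G))

/-- The Chermak-Delgado lattice of `G`: the set of subgroups whose
Chermak-Delgado measure is maximal. -/
def CD (G : Type*) [Group G] : Set (Subgroup G) :=
  {H : Subgroup G | ∀ K : Subgroup G, cdMeasure G K ≤ cdMeasure G H}

namespace ChermakDelgado

open Subgroup

variable {G : Type*} [Group G]

theorem card_mul_relIndex {H K : Subgroup G} (h : H ≤ K) :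
    Nat.card H * H.relIndex K = Nat.card K := by
  simpa [relIndex_bot_left] using relIndex_mul_relIndex ⊥ H K bot_le h

theorem centralizer_sup (H K : Subgroup G) :
    centralizer ((H ⊔ K : Subgroup G) : Set G) = centralizer H ⊓ centralizer K := by
  rw [← closure_eq H, ← closure_eq K, ← Subgroup.closure_union, centralizer_closure, closure_eq,
    closure_eq]
  ext x
  simp [mem_centralizer_iff, or_imp, forall_and]

theorem le_centralizer_centralizer (H : Subgroup G) :
    H ≤ centralizer (centralizer (H : Set G) : Set G) :=
  le_centralizer_iff.mp le_rfl

theorem sup_zpowers_le_centralizer {B : Subgroup G} (hB : B ≤ centralizer B) {x : G}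
    (hx : x ∈ centralizer B) :
    B ⊔ zpowers x ≤ centralizer ((B ⊔ zpowers x : Subgroup G) : Set G) := by
  rw [centralizer_sup]
  exact sup_le (le_inf hB (le_centralizer_iff.mp (zpowers_le.mpr hx)))
    (le_inf (zpowers_le.mpr hx) (le_centralizer _))

theorem exists_gt_le_centralizer {N : Subgroup G} (hN : N < centralizer N) :
    ∃ B : Subgroup G, N < B ∧ B ≤ centralizer B := by
  obtain ⟨x, hxC, hxN⟩ := SetLike.exists_of_lt hN
  exact ⟨N ⊔ zpowers x, left_lt_sup.mpr fun h => hxN (zpowers_le.mp h),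
    sup_zpowers_le_centralizer hN.le hxC⟩

theorem inf_centralizer_le_centralizer (H : Subgroup G) :
    H ⊓ centralizer H ≤ centralizer ((H ⊓ centralizer H : Subgroup G) : Set G) :=
  inf_le_right.trans (centralizer_le inf_le_left)

theorem cdMeasure_center : cdMeasure G (center G) = Nat.card (center G) * Nat.card G := by
  rw [cdMeasure, centralizer_center, card_top]

theorem cdMeasure_top : cdMeasure G ⊤ = cdMeasure G (center G) := by
  rw [cdMeasure_center, cdMeasure, card_top, coe_top, centralizer_univ, mul_comm]

section Finite

variable [Finite G]

theorem exists_ge_centralizer_eq {N : Subgroup G} (hN : N ≤ centralizer N) :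
    ∃ B : Subgroup G, N ≤ B ∧ centralizer B = B := by
  induction N using WellFoundedGT.induction with
  | _ N ih =>
    rcases hN.lt_or_eq with hlt | heq
    · obtain ⟨B, hNB, hB⟩ := exists_gt_le_centralizer hlt
      obtain ⟨B', hBB', hB'⟩ := ih B hNB hB
      exact ⟨B', hNB.le.trans hBB', hB'⟩
    · exact ⟨N, le_rfl, heq.symm⟩

theorem exists_gt_centralizer_eq {N : Subgroup G} (hN : N < centralizer N) :
    ∃ B : Subgroup G, N < B ∧ centralizer B = B := by
  obtain ⟨B, hNB, hB⟩ := exists_gt_le_centralizer hN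
  obtain ⟨B', hBB', hB'⟩ := exists_ge_centralizer_eq hB
  exact ⟨B', hNB.trans_le hBB', hB'⟩

theorem le_relIndex_of_lt {p : ℕ} (hpmin : ∀ q : ℕ, q.Prime → q ∣ Nat.card G → p ≤ q)
    {H K : Subgroup G} (h : H < K) : p ≤ H.relIndex K := by
  have hdvd : H.relIndex K ∣ Nat.card G :=
    (relIndex_dvd_card (H := H) (K := K)).trans (card_subgroup_dvd_card K)
  have hne_one : H.relIndex K ≠ 1 := fun h1 => h.not_ge (relIndex_eq_one.mp h1)
  have hne_zero : H.relIndex K ≠ 0 := ne_zero_of_dvd_ne_zero Nat.card_pos.ne' hdvd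
  exact (hpmin _ (Nat.minFac_prime hne_one) ((Nat.minFac_dvd _).trans hdvd)).trans
    (Nat.minFac_le (Nat.pos_of_ne_zero hne_zero))

theorem card_mul_card_le_card_inf_mul_card_sup (H K : Subgroup G) :
    Nat.card H * Nat.card K ≤ Nat.card (H ⊓ K : Subgroup G) * Nat.card (H ⊔ K : Subgroup G) := by
  have hH : Nat.card (H ⊓ K : Subgroup G) * K.relIndex H = Nat.card H := by
    rw [← inf_relIndex_left, card_mul_relIndex inf_le_left]
  have hK := card_mul_relIndex (le_sup_right : K ≤ H ⊔ K)
  have hle : K.relIndex H ≤ K.relIndex (H ⊔ K) :=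
    relIndex_le_of_le_right le_sup_left isFiniteRelIndex_of_finiteIndex.relIndex_ne_zero
  rw [← hH, ← hK]
  calc _ = Nat.card (H ⊓ K : Subgroup G) * Nat.card K * K.relIndex H := by ring
    _ ≤ Nat.card (H ⊓ K : Subgroup G) * Nat.card K * K.relIndex (H ⊔ K) := by gcongr
    _ = _ := by ring

theorem cdMeasure_mul_cdMeasure_le (H K : Subgroup G) :
    cdMeasure G H * cdMeasure G K ≤ cdMeasure G (H ⊓ K) * cdMeasure G (H ⊔ K) := by
  have hC : centralizer (H : Set G) ⊔ centralizer K ≤ centralizer ((H ⊓ K : Subgroup G) : Set G) :=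
    sup_le (centralizer_le inf_le_left) (centralizer_le inf_le_right)
  have hcard := card_mul_card_le_card_inf_mul_card_sup (centralizer (H : Set G)) (centralizer K)
  rw [← centralizer_sup] at hcard
  calc cdMeasure G H * cdMeasure G K
      = (Nat.card H * Nat.card K) *
          (Nat.card (centralizer (H : Set G)) * Nat.card (centralizer (K : Set G))) := by
        rw [cdMeasure, cdMeasure]; ring
    _ ≤ (Nat.card (H ⊓ K : Subgroup G) * Nat.card (H ⊔ K : Subgroup G)) *
          (Nat.card (centralizer ((H ⊔ K : Subgroup G) : Set G)) *
            Nat.card (centralizer ((H ⊓ K : Subgroup G) : Set G))) :=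
        Nat.mul_le_mul (card_mul_card_le_card_inf_mul_card_sup H K)
          (hcard.trans (Nat.mul_le_mul_left _ (card_le_of_le hC)))
    _ = cdMeasure G (H ⊓ K) * cdMeasure G (H ⊔ K) := by rw [cdMeasure, cdMeasure]; ring

theorem cdMeasure_pos (H : Subgroup G) : 0 < cdMeasure G H :=
  Nat.mul_pos Nat.card_pos Nat.card_pos

theorem cdMeasure_le_cdMeasure_centralizer (H : Subgroup G) :
    cdMeasure G H ≤ cdMeasure G (centralizer H) := by
  rw [cdMeasure, cdMeasure, mul_comm]
  exact Nat.mul_le_mul_left _ (card_le_of_le (le_centralizer_centralizer H))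

theorem CD_nonempty : (CD G).Nonempty :=
  let ⟨H, hH⟩ := Finite.exists_max (cdMeasure G)
  ⟨H, hH⟩

variable {H K : Subgroup G}

theorem centralizer_mem_CD (hH : H ∈ CD G) : centralizer (H : Set G) ∈ CD G :=
  fun L => (hH L).trans (cdMeasure_le_cdMeasure_centralizer H)

theorem centralizer_centralizer_of_mem_CD (hH : H ∈ CD G) :
    centralizer (centralizer (H : Set G) : Set G) = H := by
  have hm : cdMeasure G (centralizer H) ≤ cdMeasure G H := hH _
  rw [cdMeasure, cdMeasure, mul_comm (Nat.card H)] at hm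
  exact (eq_of_le_of_card_ge (le_centralizer_centralizer H)
    (Nat.le_of_mul_le_mul_left hm Nat.card_pos)).symm

theorem center_le_of_mem_CD (hH : H ∈ CD G) : center G ≤ H :=
  centralizer_centralizer_of_mem_CD hH ▸ center_le_centralizer _

theorem inf_mem_CD (hH : H ∈ CD G) (hK : K ∈ CD G) : H ⊓ K ∈ CD G := by
  have hle : cdMeasure G H * cdMeasure G K ≤ cdMeasure G (H ⊓ K) * cdMeasure G K :=
    (cdMeasure_mul_cdMeasure_le H K).trans (Nat.mul_le_mul_left _ (hK _))
  exact fun L => (hH L).trans (Nat.le_of_mul_le_mul_right hle (cdMeasure_pos K))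

theorem inf_centralizer_mem_CD (hH : H ∈ CD G) : H ⊓ centralizer H ∈ CD G :=
  inf_mem_CD hH (centralizer_mem_CD hH)

theorem pow_four_le_index_center_of_centralizer_eq {p : ℕ} {A : Subgroup G}
    (hAmax : ∀ B : Subgroup G, centralizer (B : Set G) = B → Nat.card B ≤ Nat.card A)
    (hiA : A.index = p ^ 2) {N : Subgroup G} (hN : N ∈ CD G) (hNC : centralizer (N : Set G) = N) :
    p ^ 4 ≤ (center G).index := by
  have hm : cdMeasure G ⊤ ≤ cdMeasure G N := hN ⊤
  rw [cdMeasure_top, cdMeasure_center, cdMeasure, hNC] at hm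
  have hNA : Nat.card N ≤ Nat.card A := hAmax N hNC
  have hGZ : Nat.card G * (Nat.card (center G) * p ^ 4) ≤
      Nat.card G * (Nat.card (center G) * (center G).index) :=
    calc Nat.card G * (Nat.card (center G) * p ^ 4)
        = p ^ 4 * (Nat.card (center G) * Nat.card G) := by ring
      _ ≤ p ^ 4 * (Nat.card A * Nat.card A) :=
        Nat.mul_le_mul_left _ (hm.trans (Nat.mul_le_mul hNA hNA))
      _ = (Nat.card A * A.index) * (Nat.card A * A.index) := by rw [hiA]; ring
      _ = Nat.card G * (Nat.card (center G) * (center G).index) := by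
        rw [card_mul_index, card_mul_index]
  exact Nat.le_of_mul_le_mul_left (Nat.le_of_mul_le_mul_left hGZ Nat.card_pos) Nat.card_pos

theorem eq_center_of_mem_CD_of_le_centralizer {p : ℕ}
    (hpmin : ∀ q : ℕ, q.Prime → q ∣ Nat.card G → p ≤ q) {A : Subgroup G}
    (hAmax : ∀ B : Subgroup G, centralizer (B : Set G) = B → Nat.card B ≤ Nat.card A)
    (hiA : A.index = p ^ 2) (hindex : (center G).index < p ^ 4) {N : Subgroup G} (hN : N ∈ CD G)
    (hNC : N ≤ centralizer N) : N = center G := by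
  rcases hNC.eq_or_lt with heq | hlt
  · exact (hindex.not_ge (pow_four_le_index_center_of_centralizer_eq hAmax hiA hN heq.symm)).elim
  · obtain ⟨B, hNB, hB⟩ := exists_gt_centralizer_eq hlt
    have hZN := center_le_of_mem_CD hN
    by_contra hne
    have hZN_lt : center G < N := lt_of_le_of_ne hZN (Ne.symm hne)
    have hle : Nat.card (center G) * p ^ 4 ≤ Nat.card (center G) * (center G).index :=
      calc Nat.card (center G) * p ^ 4 = Nat.card (center G) * p * p * p ^ 2 := by ring
        _ ≤ Nat.card (center G) * (center G).relIndex N * N.relIndex B * p ^ 2 := by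
          gcongr
          · exact le_relIndex_of_lt hpmin hZN_lt
          · exact le_relIndex_of_lt hpmin hNB
        _ = Nat.card B * A.index := by rw [card_mul_relIndex hZN, card_mul_relIndex hNB.le, hiA]
        _ ≤ Nat.card A * A.index := by gcongr; exact hAmax B hB
        _ = Nat.card (center G) * (center G).index := by rw [card_mul_index, card_mul_index]
    exact hindex.not_ge (Nat.le_of_mul_le_mul_left hle Nat.card_pos)

theorem center_mem_CD {p : ℕ} (hpmin : ∀ q : ℕ, q.Prime → q ∣ Nat.card G → p ≤ q)
    {A : Subgroup G}
    (hAmax : ∀ B : Subgroup G, centralizer (B : Set G) = B → Nat.card B ≤ Nat.card A)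
    (hiA : A.index = p ^ 2) (hindex : (center G).index < p ^ 4) : center G ∈ CD G := by
  obtain ⟨H, hH⟩ := CD_nonempty (G := G)
  rw [← eq_center_of_mem_CD_of_le_centralizer hpmin hAmax hiA hindex (inf_centralizer_mem_CD hH)
    (inf_centralizer_le_centralizer H)]
  exact inf_centralizer_mem_CD hH

theorem sq_mul_card_le_card {p : ℕ} (hpmin : ∀ q : ℕ, q.Prime → q ∣ Nat.card G → p ≤ q)
    (hZ : center G ∈ CD G) (hHC : H ⊓ centralizer H ≤ center G)
    (hC : ¬ centralizer (H : Set G) ≤ center G) : p ^ 2 * Nat.card H ≤ Nat.card G := by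
  obtain ⟨x, hxC, hxZ⟩ := SetLike.not_le_iff_exists.mp hC
  set B := center G ⊔ zpowers x
  have hZB : center G < B := left_lt_sup.mpr fun h => hxZ (zpowers_le.mp h)
  have hBC : B ≤ centralizer H := sup_le (center_le_centralizer _) (zpowers_le.mpr hxC)
  have hBB : B ≤ centralizer B :=
    sup_zpowers_le_centralizer (center_le_centralizer _) (by rw [centralizer_center]; trivial)
  have hHB : Nat.card H * Nat.card B ≤ Nat.card (center G) * Nat.card (centralizer (B : Set G)) :=
    calc Nat.card H * Nat.card B
        ≤ Nat.card (H ⊓ B : Subgroup G) * Nat.card (H ⊔ B : Subgroup G) :=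
          card_mul_card_le_card_inf_mul_card_sup H B
      _ ≤ _ := Nat.mul_le_mul (card_le_of_le ((inf_le_inf_left H hBC).trans hHC))
          (card_le_of_le (sup_le (le_centralizer_iff.mp hBC) hBB))
  have hmB : Nat.card B * Nat.card (centralizer (B : Set G)) ≤ Nat.card (center G) * Nat.card G :=
    cdMeasure_center (G := G) ▸ hZ B
  have hpB : Nat.card (center G) * p ≤ Nat.card B :=
    card_mul_relIndex hZB.le ▸ Nat.mul_le_mul_left _ (le_relIndex_of_lt hpmin hZB)
  have hle : (Nat.card (center G) * Nat.card (center G)) * (p ^ 2 * Nat.card H) ≤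
      (Nat.card (center G) * Nat.card (center G)) * Nat.card G :=
    calc _ = Nat.card H * (Nat.card (center G) * p) * (Nat.card (center G) * p) := by ring
      _ ≤ Nat.card H * Nat.card B * Nat.card B := by gcongr
      _ ≤ Nat.card (center G) * Nat.card (centralizer (B : Set G)) * Nat.card B := by gcongr
      _ = Nat.card (center G) * (Nat.card B * Nat.card (centralizer (B : Set G))) := by ring
      _ ≤ Nat.card (center G) * (Nat.card (center G) * Nat.card G) := by gcongr
      _ = _ := by ring
  exact Nat.le_of_mul_le_mul_left hle (Nat.mul_pos Nat.card_pos Nat.card_pos)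

theorem pow_four_le_index_center {p : ℕ} (hpmin : ∀ q : ℕ, q.Prime → q ∣ Nat.card G → p ≤ q)
    (hZ : center G ∈ CD G) (hH : H ∈ CD G) (hHC : H ⊓ centralizer H = center G)
    (hHZ : ¬ H ≤ center G) (hCZ : ¬ centralizer (H : Set G) ≤ center G) :
    p ^ 4 ≤ (center G).index := by
  have hCC := centralizer_centralizer_of_mem_CD hH
  have h₁ := sq_mul_card_le_card hpmin hZ hHC.le hCZ
  have h₂ := sq_mul_card_le_card (H := centralizer H) hpmin hZ (by rw [hCC, inf_comm, hHC])
    (by rwa [hCC])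
  have hm : cdMeasure G H = cdMeasure G (center G) := le_antisymm (hZ H) (hH _)
  rw [cdMeasure, cdMeasure_center] at hm
  have hle : Nat.card G * (Nat.card (center G) * p ^ 4) ≤
      Nat.card G * (Nat.card (center G) * (center G).index) :=
    calc _ = (p ^ 2 * Nat.card H) * (p ^ 2 * Nat.card (centralizer (H : Set G))) := by
          rw [mul_mul_mul_comm, hm]; ring
      _ ≤ Nat.card G * Nat.card G := Nat.mul_le_mul h₁ h₂
      _ = _ := by rw [card_mul_index]
  exact Nat.le_of_mul_le_mul_left (Nat.le_of_mul_le_mul_left hle Nat.card_pos) Nat.card_pos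

end Finite

end ChermakDelgado

open ChermakDelgado in
theorem stmt_4_general (G : Type*) [Group G] [Finite G] (p : ℕ)
    (hpmin : ∀ q : ℕ, q.Prime → q ∣ Nat.card G → p ≤ q)
    (A : Subgroup G)
    (hAmax : ∀ B : Subgroup G, Subgroup.centralizer (B : Set G) = B →
      Nat.card B ≤ Nat.card A)
    (hiA : A.index = p ^ 2)
    (hZ₂ : (Subgroup.center G).index < p ^ 4) :
    CD G = {Subgroup.center G, ⊤} := by
  have hZ := center_mem_CD hpmin hAmax hiA hZ₂
  ext H
  simp only [Set.mem_insert_iff, Set.mem_singleton_iff]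
  refine ⟨fun hH => ?_, ?_⟩
  · have hHC := eq_center_of_mem_CD_of_le_centralizer hpmin hAmax hiA hZ₂
      (inf_centralizer_mem_CD hH) (inf_centralizer_le_centralizer H)
    by_cases hHZ : H ≤ Subgroup.center G
    · exact Or.inl (le_antisymm hHZ (center_le_of_mem_CD hH))
    by_cases hCZ : Subgroup.centralizer (H : Set G) ≤ Subgroup.center G
    · right
      rw [← centralizer_centralizer_of_mem_CD hH,
        le_antisymm hCZ (Subgroup.center_le_centralizer _), Subgroup.centralizer_center]
    exact absurd (pow_four_le_index_center hpmin hZ hH hHC hHZ hCZ) hZ₂.not_ge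
  · rintro (rfl | rfl)
    · exact hZ
    · exact fun K => cdMeasure_top (G := G) ▸ hZ K

theorem stmt_4 (G : Type*) [Group G] [Finite G] (p : ℕ) (hp : p.Prime)
    (hpdvd : p ∣ Nat.card G)
    (hpmin : ∀ q : ℕ, q.Prime → q ∣ Nat.card G → p ≤ q)
    (A : Subgroup G) (hA : Subgroup.centralizer (A : Set G) = A)
    (hAmax : ∀ B : Subgroup G, Subgroup.centralizer (B : Set G) = B →
      Nat.card B ≤ Nat.card A)
    (hiA : A.index = p ^ 2)
    (hZ₁ : p ^ 2 < (Subgroup.center G).index)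
    (hZ₂ : (Subgroup.center G).index < p ^ 4) :
    CD G = {Subgroup.center G, ⊤} :=
  stmt_4_general G p hpmin A hAmax hiA hZ₂
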